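/- arXiv:2004.10697 — 3 statements merged into one kernel-verified Lean document; each statement's English description precedes it below -/
import Mathlib

section
/- With λ > 0, u₀ = 1/(4·sinh²(λ/2)) and φ(u) = λu - (1+√(1+4u))/2 - u·log((√(1+4u)+1)/(√(1+4u)-1)), the second derivative satisfies φ''(u₀) = tanh(λ/2)/u₀; in particular φ''(u₀) > 0. -/
/-! Writing `s = √(1 + 4u)`, one finds `φ'(u) = λ - log ((s + 1) / (s - 1))` and
`φ''(u) = 1 / (u s)`. At `u₀ = 1 / (4 sinh² (λ/2))` we have `1 + 4u₀ = coth² (λ/2)`,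
so `φ''(u₀) = tanh (λ/2) / u₀`. -/

open Real Set

noncomputable section

def logRatio (u : ℝ) : ℝ := log ((√(1 + 4 * u) + 1) / (√(1 + 4 * u) - 1))

def phi (l u : ℝ) : ℝ := l * u - (1 + √(1 + 4 * u)) / 2 - u * logRatio u

end

lemma one_lt_sqrt_one_add_four_mul {u : ℝ} (hu : 0 < u) : 1 < √(1 + 4 * u) :=
  lt_sqrt_of_sq_lt (by linarith)

lemma hasDerivAt_sqrt_one_add_four_mul {u : ℝ} (hu : 0 < 1 + 4 * u) :
    HasDerivAt (fun v => √(1 + 4 * v)) (2 / √(1 + 4 * u)) u := by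
  refine (((hasDerivAt_id u).const_mul 4 |>.const_add 1).sqrt hu.ne').congr_deriv ?_
  rw [show (4 : ℝ) * 1 = 2 * 2 by norm_num, mul_div_mul_left _ _ two_ne_zero]
  rfl

lemma hasDerivAt_logRatio {u : ℝ} (hu : 0 < u) :
    HasDerivAt logRatio (-(1 / (u * √(1 + 4 * u)))) u := by
  have hs := one_lt_sqrt_one_add_four_mul hu
  have hsq : √(1 + 4 * u) ^ 2 = 1 + 4 * u := sq_sqrt (by linarith)
  have hs' := hasDerivAt_sqrt_one_add_four_mul (u := u) (by linarith)
  refine (((hs'.add_const 1).div (hs'.sub_const 1) (by linarith)).log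
    (div_pos (by linarith) (by linarith)).ne').congr_deriv ?_
  have hs1 : √(1 + 4 * u) - 1 ≠ 0 := by linarith
  simp only [Pi.div_apply]
  field_simp
  linear_combination hsq

lemma hasDerivAt_phi (l : ℝ) {u : ℝ} (hu : 0 < u) :
    HasDerivAt (phi l) (l - logRatio u) u := by
  refine ((((hasDerivAt_id u).const_mul l).sub
    ((hasDerivAt_sqrt_one_add_four_mul (by linarith)).const_add 1 |>.div_const 2)).sub
    ((hasDerivAt_id u).mul (hasDerivAt_logRatio hu))).congr_deriv ?_
  simp only [id]
  field_simp
  ring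

lemma hasDerivAt_deriv_phi (l : ℝ) {u : ℝ} (hu : 0 < u) :
    HasDerivAt (fun v => l - logRatio v) (1 / (u * √(1 + 4 * u))) u := by
  simpa using (hasDerivAt_logRatio hu).const_sub l

lemma deriv_deriv_of_eqOn_phi {l : ℝ} {φ : ℝ → ℝ} (hφ : EqOn φ (phi l) (Ioi 0)) {u : ℝ}
    (hu : 0 < u) : deriv (deriv φ) u = 1 / (u * √(1 + 4 * u)) := by
  have hφ' : EqOn (deriv φ) (fun v => l - logRatio v) (Ioi 0) := fun v hv =>
    (hφ.deriv isOpen_Ioi hv).trans (hasDerivAt_phi l hv).deriv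
  exact (hφ'.deriv isOpen_Ioi hu).trans (hasDerivAt_deriv_phi l hu).deriv

lemma sqrt_one_add_inv_sinh_sq {x : ℝ} (hx : 0 < x) :
    √(1 + 4 * (1 / (4 * sinh x ^ 2))) = cosh x / sinh x := by
  have hsinh : 0 < sinh x := sinh_pos_iff.2 hx
  rw [sqrt_eq_iff_eq_sq (by positivity) (by positivity), div_pow, cosh_sq]
  field_simp

/-- For `λ > 0` and `u₀ = 1/(4 sinh²(λ/2))`, the second derivative of
`φ(u) = λu - (1+√(1+4u))/2 - u log((√(1+4u)+1)/(√(1+4u)-1))` at `u₀`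
equals `tanh(λ/2)/u₀`, and in particular is positive. -/
theorem phi_second_deriv_at_u0 (l : ℝ) (hl : 0 < l)
    (φ : ℝ → ℝ)
    (hφ : ∀ u : ℝ, 0 < u → φ u =
      l * u - (1 + Real.sqrt (1 + 4 * u)) / 2 -
        u * Real.log ((Real.sqrt (1 + 4 * u) + 1) / (Real.sqrt (1 + 4 * u) - 1)))
    (u₀ : ℝ) (hu₀ : u₀ = 1 / (4 * (Real.sinh (l / 2)) ^ 2)) :
    deriv (deriv φ) u₀ = Real.tanh (l / 2) / u₀ ∧ 0 < deriv (deriv φ) u₀ := by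
  have hx : 0 < l / 2 := by positivity
  have hsinh : 0 < sinh (l / 2) := sinh_pos_iff.2 hx
  have hu₀pos : 0 < u₀ := by rw [hu₀]; positivity
  have hval : deriv (deriv φ) u₀ = tanh (l / 2) / u₀ := by
    rw [deriv_deriv_of_eqOn_phi (fun u hu => hφ u hu) hu₀pos, hu₀, sqrt_one_add_inv_sinh_sq hx,
      tanh_eq_sinh_div_cosh]
    field_simp
  refine ⟨hval, hval ▸ div_pos ?_ hu₀pos⟩
  rw [tanh_eq_sinh_div_cosh]
  exact div_pos hsinh (cosh_pos _)
end

section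
/- Let b, x > 0. If a < 0 is a zero of a ↦ M(a,b,x), then it is a simple zero, i.e., ∂M/∂a(a,b,x) ≠ 0. Indeed, ∫₀ˣ t^{b-1}e^{-t}M(a,b,t)²dt = -x^b e^{-x} · (∂/∂a)M(a,b,x) · (∂/∂x)M(a,b,x). -/
/-!
Write `F = M(a,b,·)` and `G = ∂ₐM(a,b,·)`. Both are entire power series, and comparing
coefficients shows `t F'' + (b - t) F' - a F = 0` (Kummer's equation) and
`t G'' + (b - t) G' - a G = F`. Consequently the weighted Wronskian
`W(t) = t^b e^{-t} (G' F - G F')` has derivative `t^{b-1} e^{-t} F²`, and `W(0) = 0` since `b > 0`.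
Integrating over `[0, x]` and using `F x = 0` gives the identity; its left-hand side is positive
because `F 0 = 1`, so `G x ≠ 0`.
-/

/-- The Kummer confluent hypergeometric function `M(a,b,x)`, real parameters. -/
noncomputable def kummerM (a b x : ℝ) : ℝ :=
  ∑' n : ℕ, (ascPochhammer ℝ n).eval a / ((ascPochhammer ℝ n).eval b * n.factorial) * x ^ n

open Set Polynomial
open scoped Nat

namespace RealPowerSeries

noncomputable def sum (c : ℕ → ℝ) (t : ℝ) : ℝ := ∑' n, c n * t ^ n

def Entire (c : ℕ → ℝ) : Prop := ∀ t : ℝ, Summable fun n => c n * t ^ n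

def derivCoeff (c : ℕ → ℝ) (n : ℕ) : ℝ := (n + 1) * c (n + 1)

variable {c e : ℕ → ℝ}

theorem entire_pow_div_factorial (K : ℝ) : Entire fun n => K ^ n / n ! := fun t =>
  (Real.summable_pow_div_factorial (K * t)).congr fun n => by rw [mul_pow]; ring

theorem Entire.of_abs_le (hc : Entire c) (h : ∀ n, |e n| ≤ c n) : Entire e := fun t =>
  .of_norm_bounded (hc |t|) fun n => by
    rw [Real.norm_eq_abs, abs_mul, abs_pow]
    exact mul_le_mul_of_nonneg_right (h n) (by positivity)

theorem Entire.const_mul (hc : Entire c) (k : ℝ) : Entire fun n => k * c n := fun t =>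
  ((hc t).mul_left k).congr fun n => by ring

theorem Entire.natCast_mul (hc : Entire c) : Entire fun n => n * c n := fun t =>
  .of_norm_bounded (hc (2 * |t|)).abs fun n => by
    have h2n : (n : ℝ) ≤ 2 ^ n := mod_cast (Nat.lt_two_pow_self).le
    calc ‖n * c n * t ^ n‖ = n * (|c n| * |t| ^ n) := by
          rw [Real.norm_eq_abs, abs_mul, abs_mul, abs_pow, Nat.abs_cast]; ring
      _ ≤ 2 ^ n * (|c n| * |t| ^ n) := by gcongr
      _ = |c n * (2 * |t|) ^ n| := by
          rw [abs_mul, abs_pow, abs_mul, abs_abs, abs_two, mul_pow]; ring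

theorem entire_derivCoeff (hc : Entire c) : Entire (derivCoeff c) := fun t => by
  have hs := ((summable_nat_add_iff 1).2 (hc.natCast_mul (|t| + 1))).abs
  refine .of_norm_bounded hs fun n => ?_
  have ht : |t| ^ n ≤ (|t| + 1) ^ (n + 1) :=
    (pow_le_pow_left₀ (abs_nonneg t) (by linarith) n).trans
      (pow_le_pow_right₀ (by linarith [abs_nonneg t]) n.le_succ)
  rw [RealPowerSeries.derivCoeff, Real.norm_eq_abs, abs_mul, abs_pow, abs_mul,
    abs_mul, abs_pow, abs_of_nonneg (by linarith [abs_nonneg t] : (0 : ℝ) ≤ |t| + 1)]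
  push_cast
  rw [← abs_mul]
  gcongr

theorem Entire.hasDerivAt_sum (hc : Entire c) (t : ℝ) :
    HasDerivAt (sum c) (sum (derivCoeff c) t) t := by
  set R := |t| + 1
  have hR : 1 ≤ R := by linarith [abs_nonneg t]
  have ht : t ∈ Ioo (-R) R := abs_lt.1 (by linarith)
  have hderiv : HasDerivAt (sum c) (∑' n, c n * (n * t ^ (n - 1))) t := by
    refine hasDerivAt_tsum_of_isPreconnected (hc.natCast_mul R).abs isOpen_Ioo
      (convex_Ioo _ _).isPreconnected (fun n y _ => (hasDerivAt_pow n y).const_mul (c n))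
      (fun n y hy => ?_) ht (hc t) ht
    have hy : |y| ≤ R := (abs_lt.2 hy).le
    calc ‖c n * (n * y ^ (n - 1))‖ = |c n| * n * |y| ^ (n - 1) := by
          rw [Real.norm_eq_abs, abs_mul, abs_mul, abs_pow, Nat.abs_cast, mul_assoc]
      _ ≤ |c n| * n * R ^ n := by
          gcongr
          exact (pow_le_pow_left₀ (abs_nonneg y) hy _).trans
            (pow_le_pow_right₀ hR (Nat.sub_le n 1))
      _ = |n * c n * R ^ n| := by
          rw [abs_mul, abs_mul, abs_pow, Nat.abs_cast, abs_of_nonneg (by linarith : (0:ℝ) ≤ R)]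
          ring
  convert hderiv using 1
  have hshift (n : ℕ) :
      c (n + 1) * ((n + 1 : ℕ) * t ^ (n + 1 - 1)) = derivCoeff c n * t ^ n := by
    simp only [derivCoeff, Nat.add_sub_cancel, Nat.cast_succ]; ring
  rw [Summable.tsum_eq_zero_add ((summable_nat_add_iff 1).1 ((entire_derivCoeff hc t).congr
    fun n => (hshift n).symm))]
  simp only [sum, hshift, CharP.cast_eq_zero, zero_mul, mul_zero, zero_add]

theorem Entire.continuous_sum (hc : Entire c) : Continuous (sum c) :=
  continuous_iff_continuousAt.2 fun t => (hc.hasDerivAt_sum t).continuousAt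

theorem sum_zero (c : ℕ → ℝ) : sum c 0 = c 0 := by
  rw [sum, tsum_eq_single 0 fun n hn => by simp [zero_pow hn]]
  simp

theorem Entire.mul_sum_derivCoeff (hc : Entire c) (t : ℝ) :
    t * sum (derivCoeff c) t = sum (fun n => n * c n) t := by
  rw [sum, sum, Summable.tsum_eq_zero_add (hc.natCast_mul t), ← tsum_mul_left]
  simp only [derivCoeff, CharP.cast_eq_zero, zero_mul, zero_add, Nat.cast_succ]
  exact tsum_congr fun n => by ring

theorem Entire.kummer_ode_of_recurrence {a b : ℝ} {g : ℕ → ℝ} (hc : Entire c)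
    (hg : Entire g)
    (hrec : ∀ n : ℕ, (n + 1) * (b + n) * c (n + 1) = (a + n) * c n + g n) (t : ℝ) :
    t * sum (derivCoeff (derivCoeff c)) t + (b - t) * sum (derivCoeff c) t - a * sum c t =
      sum g t := by
  have hc' := entire_derivCoeff hc
  rw [show ∀ u v w : ℝ, t * u + (b - t) * v - a * w = t * u + b * v - t * v - a * w by
    intros; ring, hc'.mul_sum_derivCoeff, hc.mul_sum_derivCoeff]
  have hsum := ((((hc'.natCast_mul t).hasSum.add ((hc' t).hasSum.mul_left b)).sub
    ((hc.natCast_mul t).hasSum)).sub ((hc t).hasSum.mul_left a))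
  refine hsum.unique ((hg t).hasSum.congr_fun fun n => ?_)
  simp only [derivCoeff]
  linear_combination (t ^ n) * hrec n

end RealPowerSeries

section AscPochhammerBounds

variable {b K y : ℝ}

theorem abs_add_natCast_le_mul (hb : 0 < b) (hK : 1 ≤ K) (hy : |y| ≤ (K - 1) * b) (k : ℕ) :
    |y + k| ≤ K * (b + k) := by
  have hk : (0 : ℝ) ≤ k := k.cast_nonneg
  calc |y + k| ≤ |y| + k := (abs_add_le _ _).trans_eq (by rw [Nat.abs_cast])
    _ ≤ K * (b + k) := by nlinarith

theorem abs_eval_ascPochhammer_le (hb : 0 < b) (hK : 1 ≤ K) (hy : |y| ≤ (K - 1) * b) (n : ℕ) :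
    |(ascPochhammer ℝ n).eval y| ≤ K ^ n * (ascPochhammer ℝ n).eval b := by
  induction n with
  | zero => simp
  | succ n ih =>
    have hPb := (ascPochhammer_pos n b hb).le
    simp only [ascPochhammer_succ_eval, abs_mul]
    calc |(ascPochhammer ℝ n).eval y| * |y + n|
        ≤ (K ^ n * (ascPochhammer ℝ n).eval b) * (K * (b + n)) :=
          mul_le_mul ih (abs_add_natCast_le_mul hb hK hy n) (abs_nonneg _) (by positivity)
      _ = K ^ (n + 1) * ((ascPochhammer ℝ n).eval b * (b + n)) := by ring

theorem mul_abs_eval_derivative_ascPochhammer_le (hb : 0 < b) (hK : 1 ≤ K)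
    (hy : |y| ≤ (K - 1) * b) (n : ℕ) :
    b * |(derivative (ascPochhammer ℝ n)).eval y| ≤
      n * K ^ n * (ascPochhammer ℝ n).eval b := by
  induction n with
  | zero => simp
  | succ n ih =>
    have hPb := (ascPochhammer_pos n b hb).le
    have hP := abs_eval_ascPochhammer_le hb hK hy n
    have hyn := abs_add_natCast_le_mul hb hK hy n
    rw [ascPochhammer_succ_right, derivative_mul]
    simp only [derivative_add, derivative_X, derivative_natCast, add_zero, eval_add, eval_mul,
      eval_X, eval_natCast, mul_one]
    calc b * |(derivative (ascPochhammer ℝ n)).eval y * (y + n) + (ascPochhammer ℝ n).eval y|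
        ≤ b * |(derivative (ascPochhammer ℝ n)).eval y| * |y + n|
            + b * |(ascPochhammer ℝ n).eval y| := by
          rw [mul_assoc, ← abs_mul, ← mul_add]
          exact mul_le_mul_of_nonneg_left (abs_add_le _ _) hb.le
      _ ≤ (n * K ^ n * (ascPochhammer ℝ n).eval b) * (K * (b + n))
            + (K * (b + n)) * (K ^ n * (ascPochhammer ℝ n).eval b) := by
          gcongr
          nlinarith
      _ = ((n + 1 : ℕ) : ℝ) * K ^ (n + 1) * ((ascPochhammer ℝ n).eval b * (b + n)) := by
          push_cast; ring

end AscPochhammerBounds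

open RealPowerSeries

noncomputable def kummerCoeff (a b : ℝ) (n : ℕ) : ℝ :=
  (ascPochhammer ℝ n).eval a / ((ascPochhammer ℝ n).eval b * n !)

noncomputable def kummerParamDerivCoeff (a b : ℝ) (n : ℕ) : ℝ :=
  (derivative (ascPochhammer ℝ n)).eval a / ((ascPochhammer ℝ n).eval b * n !)

theorem kummerM_eq_sum (a b : ℝ) : kummerM a b = sum (kummerCoeff a b) := rfl

section KummerCoeff

variable {a b K : ℝ}

theorem abs_kummerCoeff_le (hb : 0 < b) (hK : 1 ≤ K) (ha : |a| ≤ (K - 1) * b) (n : ℕ) :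
    |kummerCoeff a b n| ≤ K ^ n / n ! := by
  have hden : 0 < (ascPochhammer ℝ n).eval b * n ! := by
    have := ascPochhammer_pos n b hb; positivity
  rw [kummerCoeff, abs_div, abs_of_pos hden, div_le_div_iff₀ hden (by positivity)]
  nlinarith [abs_eval_ascPochhammer_le hb hK ha n, (by positivity : (0 : ℝ) < n !)]

theorem abs_kummerParamDerivCoeff_le (hb : 0 < b) (hK : 1 ≤ K) (ha : |a| ≤ (K - 1) * b)
    (n : ℕ) : |kummerParamDerivCoeff a b n| ≤ b⁻¹ * (n * (K ^ n / n !)) := by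
  have hden : 0 < (ascPochhammer ℝ n).eval b * n ! := by
    have := ascPochhammer_pos n b hb; positivity
  rw [kummerParamDerivCoeff, abs_div, abs_of_pos hden, div_le_iff₀ hden]
  calc |(derivative (ascPochhammer ℝ n)).eval a|
      = b⁻¹ * (b * |(derivative (ascPochhammer ℝ n)).eval a|) := by field_simp
    _ ≤ b⁻¹ * (n * K ^ n * (ascPochhammer ℝ n).eval b) :=
        mul_le_mul_of_nonneg_left (mul_abs_eval_derivative_ascPochhammer_le hb hK ha n)
          (inv_nonneg.2 hb.le)
    _ = b⁻¹ * (n * (K ^ n / n !)) * ((ascPochhammer ℝ n).eval b * n !) := by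
        field_simp

theorem entire_kummerCoeff (a : ℝ) (hb : 0 < b) : Entire (kummerCoeff a b) :=
  (entire_pow_div_factorial _).of_abs_le <| abs_kummerCoeff_le (K := 1 + |a| / b) hb
    (le_add_of_nonneg_right (by positivity))
    (by rw [add_sub_cancel_left, div_mul_cancel₀ _ hb.ne'])

theorem entire_kummerParamDerivCoeff (a : ℝ) (hb : 0 < b) :
    Entire (kummerParamDerivCoeff a b) :=
  ((entire_pow_div_factorial _).natCast_mul.const_mul _).of_abs_le <|
    abs_kummerParamDerivCoeff_le (K := 1 + |a| / b) hb
      (le_add_of_nonneg_right (by positivity))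
      (by rw [add_sub_cancel_left, div_mul_cancel₀ _ hb.ne'])

theorem kummerCoeff_succ (a : ℝ) (hb : 0 < b) (n : ℕ) :
    (n + 1) * (b + n) * kummerCoeff a b (n + 1) = (a + n) * kummerCoeff a b n := by
  have := (ascPochhammer_pos n b hb).ne'
  simp only [kummerCoeff, ascPochhammer_succ_eval, Nat.factorial_succ, Nat.cast_mul]
  field_simp
  push_cast
  ring

theorem kummerParamDerivCoeff_succ (a : ℝ) (hb : 0 < b) (n : ℕ) :
    (n + 1) * (b + n) * kummerParamDerivCoeff a b (n + 1) =
      (a + n) * kummerParamDerivCoeff a b n + kummerCoeff a b n := by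
  have := (ascPochhammer_pos n b hb).ne'
  simp only [kummerCoeff, kummerParamDerivCoeff, ascPochhammer_succ_right,
    derivative_mul, derivative_add, derivative_X, derivative_natCast, add_zero, eval_add,
    eval_mul, eval_X, eval_natCast, mul_one, Nat.factorial_succ, Nat.cast_mul]
  field_simp
  push_cast
  ring

theorem hasDerivAt_kummerM_param (hb : 0 < b) (a t : ℝ) :
    HasDerivAt (fun a' => kummerM a' b t) (sum (kummerParamDerivCoeff a b) t) a := by
  set K := 1 + (|a| + 1) / b
  have hK : 1 ≤ K := le_add_of_nonneg_right (by positivity)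
  have ha : a ∈ Ioo (a - 1) (a + 1) := ⟨by linarith, by linarith⟩
  show HasDerivAt (fun a' => ∑' n, kummerCoeff a' b n * t ^ n) _ a
  refine hasDerivAt_tsum_of_isPreconnected (g := fun n a' => kummerCoeff a' b n * t ^ n)
    (g' := fun n a' => kummerParamDerivCoeff a' b n * t ^ n)
    (((entire_pow_div_factorial K).natCast_mul.const_mul b⁻¹) |t|) isOpen_Ioo
    (convex_Ioo _ _).isPreconnected (fun n y _ => ?_) (fun n y hy => ?_) ha
    (entire_kummerCoeff a hb t) ha
  · exact (((ascPochhammer ℝ n).hasDerivAt y).div_const _).mul_const _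
  · have hy : |y| ≤ (K - 1) * b := by
      simp only [K, add_sub_cancel_left, div_mul_cancel₀ _ hb.ne']
      exact abs_le.2 ⟨by linarith [neg_abs_le a, hy.1], by linarith [le_abs_self a, hy.2]⟩
    rw [Real.norm_eq_abs, abs_mul, abs_pow]
    exact mul_le_mul_of_nonneg_right (abs_kummerParamDerivCoeff_le hb hK hy n) (by positivity)

theorem kummerM_ode (a : ℝ) (hb : 0 < b) (t : ℝ) :
    t * sum (derivCoeff (derivCoeff (kummerCoeff a b))) t
      + (b - t) * sum (derivCoeff (kummerCoeff a b)) t - a * sum (kummerCoeff a b) t = 0 := by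
  simpa [RealPowerSeries.sum] using (entire_kummerCoeff a hb).kummer_ode_of_recurrence
    (g := fun _ => 0) (fun _ => by simp) (fun n => by rw [kummerCoeff_succ a hb, add_zero]) t

theorem kummerM_param_deriv_ode (a : ℝ) (hb : 0 < b) (t : ℝ) :
    t * sum (derivCoeff (derivCoeff (kummerParamDerivCoeff a b))) t
      + (b - t) * sum (derivCoeff (kummerParamDerivCoeff a b)) t
      - a * sum (kummerParamDerivCoeff a b) t = sum (kummerCoeff a b) t :=
  (entire_kummerParamDerivCoeff a hb).kummer_ode_of_recurrence (entire_kummerCoeff a hb)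
    (kummerParamDerivCoeff_succ a hb) t

end KummerCoeff

section Wronskian

open Real intervalIntegral MeasureTheory

variable {a b x : ℝ} {F F' F'' G G' G'' : ℝ → ℝ}

theorem hasDerivAt_rpow_mul_exp_neg_mul_wronskian {t : ℝ} (ht : 0 < t)
    (hF : HasDerivAt F (F' t) t) (hF' : HasDerivAt F' (F'' t) t)
    (hG : HasDerivAt G (G' t) t) (hG' : HasDerivAt G' (G'' t) t)
    (odeF : t * F'' t + (b - t) * F' t - a * F t = 0)
    (odeG : t * G'' t + (b - t) * G' t - a * G t = F t) :
    HasDerivAt (fun s => s ^ b * exp (-s) * (G' s * F s - G s * F' s))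
      (t ^ (b - 1) * exp (-t) * F t ^ 2) t := by
  have hpow : HasDerivAt (fun s : ℝ => s ^ b) (b * t ^ (b - 1)) t :=
    hasDerivAt_rpow_const (Or.inl ht.ne')
  have hexp : HasDerivAt (fun s : ℝ => exp (-s)) (-exp (-t)) t := by
    simpa using (hasDerivAt_neg t).exp
  have htb : t ^ b = t ^ (b - 1) * t := by
    rw [← rpow_add_one ht.ne', sub_add_cancel]
  refine ((hpow.mul hexp).mul ((hG'.mul hF).sub (hG.mul hF'))).congr_deriv ?_
  simp only [Pi.mul_apply, Pi.sub_apply]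
  rw [htb]
  linear_combination (t ^ (b - 1) * exp (-t)) * (F t * odeG - G t * odeF)

theorem intervalIntegrable_rpow_mul_exp_neg_mul_sq (hb : 0 < b) (hF : Continuous F) :
    IntervalIntegrable (fun t => t ^ (b - 1) * exp (-t) * F t ^ 2) volume 0 x := by
  simpa only [mul_assoc, Pi.mul_apply, Pi.pow_apply] using
    (intervalIntegrable_rpow' (by linarith : -1 < b - 1)).mul_continuousOn
      (continuous_neg.rexp.mul (hF.pow 2)).continuousOn

theorem integral_rpow_mul_exp_neg_mul_sq (hb : 0 < b) (hx : 0 ≤ x)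
    (hF : ∀ t, HasDerivAt F (F' t) t) (hF' : ∀ t, HasDerivAt F' (F'' t) t)
    (hG : ∀ t, HasDerivAt G (G' t) t) (hG' : ∀ t, HasDerivAt G' (G'' t) t)
    (odeF : ∀ t, t * F'' t + (b - t) * F' t - a * F t = 0)
    (odeG : ∀ t, t * G'' t + (b - t) * G' t - a * G t = F t) :
    ∫ t in (0 : ℝ)..x, t ^ (b - 1) * exp (-t) * F t ^ 2 =
      x ^ b * exp (-x) * (G' x * F x - G x * F' x) := by
  have hFc : Continuous F := continuous_iff_continuousAt.2 fun t => (hF t).continuousAt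
  have hF'c : Continuous F' := continuous_iff_continuousAt.2 fun t => (hF' t).continuousAt
  have hGc : Continuous G := continuous_iff_continuousAt.2 fun t => (hG t).continuousAt
  have hG'c : Continuous G' := continuous_iff_continuousAt.2 fun t => (hG' t).continuousAt
  have hW : ContinuousOn (fun s => s ^ b * exp (-s) * (G' s * F s - G s * F' s)) (Icc 0 x) :=
    (((continuous_id.rpow_const fun _ => Or.inr hb.le).mul (continuous_neg.rexp)).mul
      ((hG'c.mul hFc).sub (hGc.mul hF'c))).continuousOn
  rw [integral_eq_sub_of_hasDeriv_right_of_le hx hW (fun t ht =>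
    (hasDerivAt_rpow_mul_exp_neg_mul_wronskian ht.1 (hF t) (hF' t) (hG t) (hG' t) (odeF t)
      (odeG t)).hasDerivWithinAt) (intervalIntegrable_rpow_mul_exp_neg_mul_sq hb hFc),
    zero_rpow hb.ne', zero_mul, zero_mul, sub_zero]

theorem integral_rpow_mul_exp_neg_mul_sq_pos (hb : 0 < b) (hx : 0 < x) (hF : Continuous F)
    (hF0 : F 0 ≠ 0) : 0 < ∫ t in (0 : ℝ)..x, t ^ (b - 1) * exp (-t) * F t ^ 2 := by
  have hnonneg : ∀ t, 0 ≤ t → 0 ≤ t ^ (b - 1) * exp (-t) * F t ^ 2 := fun t ht => by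
    have := rpow_nonneg ht (b - 1); positivity
  obtain ⟨c, ⟨hFc, hcx⟩, hc⟩ : ∃ c, (F c ≠ 0 ∧ c < x) ∧ 0 < c :=
    (((hF.continuousAt.eventually_ne hF0).and (Iio_mem_nhds hx)).filter_mono
      nhdsWithin_le_nhds |>.and (self_mem_nhdsWithin (s := Ioi 0))).exists
  have hpos : 0 < ∫ t in c..x, t ^ (b - 1) * exp (-t) * F t ^ 2 := by
    refine integral_pos hcx ?_ (fun t ht => hnonneg t (hc.trans ht.1).le)
      ⟨c, left_mem_Icc.2 hcx.le, ?_⟩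
    · exact ((continuousOn_id.rpow_const fun t ht => Or.inl (hc.trans_le ht.1).ne').mul
        continuous_neg.rexp.continuousOn).mul (hF.pow 2).continuousOn
    · have := rpow_pos_of_pos hc (b - 1); positivity
  refine hpos.trans_le (integral_mono_interval hc.le hcx.le le_rfl ?_
    (intervalIntegrable_rpow_mul_exp_neg_mul_sq hb hF))
  exact (ae_restrict_iff' measurableSet_Ioc).2 (ae_of_all _ fun t ht => hnonneg t ht.1.le)

end Wronskian

theorem kummerM_zero_simple_general (b x : ℝ) (hb : 0 < b) (hx : 0 < x)
    (a : ℝ) (hzero : kummerM a b x = 0) :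
    (∫ t in (0 : ℝ)..x, t ^ (b - 1) * Real.exp (-t) * (kummerM a b t) ^ 2) =
      -(x ^ b * Real.exp (-x)) *
        deriv (fun a' : ℝ => kummerM a' b x) a * deriv (fun x' : ℝ => kummerM a b x') x ∧
    deriv (fun a' : ℝ => kummerM a' b x) a ≠ 0 := by
  have hc := entire_kummerCoeff a hb
  have hd := entire_kummerParamDerivCoeff a hb
  rw [(hasDerivAt_kummerM_param hb a x).deriv, kummerM_eq_sum, (hc.hasDerivAt_sum x).deriv]
  have hint := integral_rpow_mul_exp_neg_mul_sq hb hx.le hc.hasDerivAt_sum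
    (entire_derivCoeff hc).hasDerivAt_sum hd.hasDerivAt_sum (entire_derivCoeff hd).hasDerivAt_sum
    (kummerM_ode a hb) (kummerM_param_deriv_ode a hb)
  have hpos := integral_rpow_mul_exp_neg_mul_sq_pos hb hx hc.continuous_sum
    (by simp [sum_zero, kummerCoeff])
  rw [show sum (kummerCoeff a b) x = 0 from hzero, mul_zero, zero_sub] at hint
  refine ⟨by rw [hint]; ring, fun hG => ?_⟩
  rw [hint, hG] at hpos
  simp at hpos

/-- For `b, x > 0`, a negative `a`-zero of `M(·,b,x)` is simple:
`∂M/∂a(a,b,x) ≠ 0`; indeed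
`∫₀ˣ t^{b-1} e^{-t} M(a,b,t)² dt = -x^b e^{-x} · ∂ₐM(a,b,x) · ∂ₓM(a,b,x)`. -/
theorem kummerM_zero_simple (b x : ℝ) (hb : 0 < b) (hx : 0 < x)
    (a : ℝ) (ha : a < 0) (hzero : kummerM a b x = 0) :
    (∫ t in (0 : ℝ)..x, t ^ (b - 1) * Real.exp (-t) * (kummerM a b t) ^ 2) =
      -(x ^ b * Real.exp (-x)) *
        deriv (fun a' : ℝ => kummerM a' b x) a * deriv (fun x' : ℝ => kummerM a b x') x ∧
    deriv (fun a' : ℝ => kummerM a' b x) a ≠ 0 :=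
  kummerM_zero_simple_general b x hb hx a hzero
end

section
/- For real s near -k (k ∈ ℕ fixed), the Pochhammer symbol satisfies (s)_k = (-1)^k k! · (1 - H_k·(s+k) + O((s+k)²)) as s → -k, where H_k = Σ_{j=1}^k 1/j is the k-th harmonic number. -/
open Asymptotics Filter Polynomial

lemma asc_eval_neg (k : ℕ) :
    (ascPochhammer ℝ k).eval (-(k : ℝ)) = (-1) ^ k * k.factorial := by
  induction k with
  | zero => simp
  | succ n ih =>
    rw [ascPochhammer_succ_left]
    simp only [eval_mul, eval_X, eval_comp, eval_add, eval_one]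
    push_cast
    rw [show -((n : ℝ) + 1) + 1 = -(n : ℝ) by ring, ih]
    push_cast [Nat.factorial_succ]
    ring

lemma asc_deriv_eval_neg (k : ℕ) :
    ((ascPochhammer ℝ k).derivative).eval (-(k : ℝ)) =
      (-1) ^ k * k.factorial * (-(∑ j ∈ Finset.range k, 1 / ((j : ℝ) + 1))) := by
  induction k with
  | zero => simp
  | succ n ih =>
    rw [ascPochhammer_succ_left, derivative_mul, derivative_X, derivative_comp]
    simp only [eval_add, eval_mul, eval_comp, eval_X, eval_one, derivative_add, derivative_X,
      derivative_one, add_zero, one_mul]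
    push_cast
    rw [show -((n : ℝ) + 1) + 1 = -(n : ℝ) by ring, ih, asc_eval_neg,
      Finset.sum_range_succ]
    have hn : ((n : ℝ) + 1) ≠ 0 := by positivity
    push_cast [Nat.factorial_succ]
    field_simp
    ring

/-- As `s → -k`, `(s)_k = (-1)^k k! (1 - H_k (s+k)) + O((s+k)²)`,
where `H_k` is the `k`-th harmonic number. -/
theorem pochhammer_expansion_near_neg_k (k : ℕ) :
    (fun s : ℝ =>
        (ascPochhammer ℝ k).eval s -
          (-1 : ℝ) ^ k * (k.factorial : ℝ) *
            (1 - (∑ j ∈ Finset.range k, 1 / ((j : ℝ) + 1)) * (s + k)))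
      =O[nhds (-(k : ℝ))] fun s : ℝ => (s + k) ^ 2 := by
  set a : ℝ := (-1) ^ k * k.factorial with ha
  set H : ℝ := ∑ j ∈ Finset.range k, 1 / ((j : ℝ) + 1) with hH
  set p : ℝ[X] := (ascPochhammer ℝ k).comp (X - C (k : ℝ)) - (C a + C (-(a * H)) * X) with hp
  have h0 : p.eval 0 = 0 := by
    simp [hp, eval_comp, asc_eval_neg, ha]
  have h1 : p.derivative.eval 0 = 0 := by
    rw [hp]
    simp only [derivative_sub, derivative_add, derivative_mul, derivative_C, derivative_X,
      derivative_comp, derivative_sub, zero_mul, add_zero, zero_add, mul_one, eval_sub, eval_add,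
      eval_mul, eval_comp, eval_C, eval_X, eval_one, eval_zero]
    rw [show (0:ℝ) - (k:ℝ) = -(k:ℝ) by ring, asc_deriv_eval_neg, ← ha, ← hH]
    ring
  obtain ⟨q, hq⟩ : X ∣ p := by
    rw [X_dvd_iff, coeff_zero_eq_eval_zero]; exact h0
  have hq0 : q.eval 0 = 0 := by
    have := h1
    rw [hq, derivative_mul, derivative_X] at this
    simpa using this
  obtain ⟨r, hr⟩ : X ∣ q := by
    rw [X_dvd_iff, coeff_zero_eq_eval_zero]; exact hq0
  have key : ∀ s : ℝ,
      (ascPochhammer ℝ k).eval s - a * (1 - H * (s + k)) = (s + k) ^ 2 * r.eval (s + k) := by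
    intro s
    have : p.eval (s + k) = (s + k) ^ 2 * r.eval (s + k) := by
      rw [hq, hr]; simp; ring
    rw [hp] at this
    simp only [eval_sub, eval_comp, eval_add, eval_mul, eval_C, eval_X, eval_neg] at this
    rw [show s + (k:ℝ) - k = s by ring] at this
    linarith [this]
  have hb : (fun s : ℝ => r.eval (s + k)) =O[nhds (-(k : ℝ))] (fun _ => (1 : ℝ)) := by
    apply Filter.Tendsto.isBigO_one
    exact (r.continuous_aeval.comp (continuous_id.add continuous_const)).tendsto _
  have main : (fun s : ℝ => (s + k) ^ 2 * r.eval (s + k)) =O[nhds (-(k : ℝ))]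
      (fun s : ℝ => (s + k) ^ 2) :=
    ((isBigO_refl (fun s : ℝ => (s + k) ^ 2) _).mul hb).congr (fun _ => rfl) (fun _ => mul_one _)
  exact main.congr (fun s => (key s).symm) (fun _ => rfl)
end
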